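/- Let p, m be integers not less than 1. The number of p-branchings with all entries at most m is equal to the number of semi-standard Young tableaux with entries in {1, 2, ..., p} having fewer than m columns. -/

import Mathlib

/-- A `p`-branching: a triangular array of positive integers `b i j`
(`1 ≤ i ≤ p`, `1 ≤ j ≤ p + 1 - i`, and `b i j = 0` outside this range), weakly
increasing along rows and weakly decreasing down columns. -/
def IsPBranching (p : ℕ) (b : ℕ → ℕ → ℕ) : Prop :=
  (∀ i j, 1 ≤ i → i ≤ p → 1 ≤ j → j ≤ p + 1 - i → 1 ≤ b i j) ∧
  (∀ i j, i < 1 ∨ p < i ∨ j < 1 ∨ p + 1 - i < j → b i j = 0) ∧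
  (∀ i j, 1 ≤ i → i + 1 ≤ p → 1 ≤ j → j ≤ p + 1 - (i + 1) → b (i + 1) j ≤ b i j) ∧
  (∀ i j, 1 ≤ i → i ≤ p → 1 ≤ j → j + 1 ≤ p + 1 - i → b i j ≤ b i (j + 1))

/-- A semi-standard Young tableau, modelled as a filling `t i j` (`i, j ≥ 1`) with
positive entries on a Young-diagram-shaped support (`t i j = 0` outside the diagram,
`t i j ≥ 1` inside), weakly increasing along rows and strictly increasing down
columns. The empty tableau is allowed. -/
def IsSSYT (t : ℕ → ℕ → ℕ) : Prop :=
  (∀ i j, i < 1 ∨ j < 1 → t i j = 0) ∧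
  (∀ i j, 1 ≤ i → 1 ≤ j → 1 ≤ t i (j + 1) → 1 ≤ t i j) ∧
  (∀ i j, 1 ≤ i → 1 ≤ j → 1 ≤ t (i + 1) j → 1 ≤ t i j) ∧
  (∀ i j, 1 ≤ i → 1 ≤ j → 1 ≤ t i (j + 1) → t i j ≤ t i (j + 1)) ∧
  (∀ i j, 1 ≤ i → 1 ≤ j → 1 ≤ t (i + 1) j → t i j < t (i + 1) j)


/-!
Row `i` of a `p`-branching is a weakly increasing sequence of length `p + 1 - i` with values
in `[1, m]`, so it is determined by the counts `c_r = #{j | r < b i j}` for `1 ≤ r < m`. The row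
of the tableau records `p + 1 - c_r` for each `r` with `c_r > 0`: a weakly increasing row with
entries in `[i, p]` and fewer than `m` cells. Since row `i + 1` of the branching is one cell
shorter and dominated by row `i`, every positive `c_r` drops strictly from row `i` to row
`i + 1`, which is the strictness of the tableau columns. The inverse map reads the branching
back as `b i j = 1 + #{r | 0 < t i r < i + j}`.
-/

open Finset

section IntervalFilter

variable {n : ℕ} {P : ℕ → Prop} [DecidablePred P]

/-- An upward closed subset of `[1, n]` is a final segment. -/
theorem pred_iff_sub_card_lt_of_upClosed (hP : ∀ j k, 1 ≤ j → j ≤ k → k ≤ n → P j → P k)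
    {j : ℕ} (hj : j ∈ Icc 1 n) : P j ↔ n - #{k ∈ Icc 1 n | P k} < j := by
  rw [mem_Icc] at hj
  constructor
  · intro hPj
    have hsub : Icc j n ⊆ {k ∈ Icc 1 n | P k} := fun k hk => by
      rw [mem_Icc] at hk
      exact mem_filter.2 ⟨mem_Icc.2 ⟨by omega, hk.2⟩, hP j k hj.1 hk.1 hk.2 hPj⟩
    have := card_le_card hsub
    rw [Nat.card_Icc] at this
    omega
  · intro hlt
    by_contra hPj
    have hsub : {k ∈ Icc 1 n | P k} ⊆ Icc (j + 1) n := fun k hk => by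
      rw [mem_filter, mem_Icc] at hk
      refine mem_Icc.2 ⟨?_, hk.1.2⟩
      by_contra hkj
      exact hPj (hP k j hk.1.1 (by omega) hj.2 hk.2)
    have := card_le_card hsub
    rw [Nat.card_Icc] at this
    omega

/-- A downward closed subset of `[1, n]` is an initial segment. -/
theorem pred_iff_le_card_of_downClosed (hP : ∀ r s, 1 ≤ r → r ≤ s → P s → P r)
    {r : ℕ} (hr : r ∈ Icc 1 n) : P r ↔ r ≤ #{s ∈ Icc 1 n | P s} := by
  rw [mem_Icc] at hr
  constructor
  · intro hPr
    have hsub : Icc 1 r ⊆ {s ∈ Icc 1 n | P s} := fun s hs => by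
      rw [mem_Icc] at hs
      exact mem_filter.2 ⟨mem_Icc.2 ⟨hs.1, by omega⟩, hP s r hs.1 hs.2 hPr⟩
    simpa using card_le_card hsub
  · intro hle
    by_contra hPr
    have hsub : {s ∈ Icc 1 n | P s} ⊆ Icc 1 (r - 1) := fun s hs => by
      rw [mem_filter, mem_Icc] at hs
      refine mem_Icc.2 ⟨hs.1.1, ?_⟩
      by_contra hsr
      exact hPr (hP r s hr.1 (by omega) hs.2)
    have := card_le_card hsub
    rw [Nat.card_Icc] at this
    omega

theorem card_filter_Icc_lt (n k : ℕ) : #{j ∈ Icc 1 n | k < j} = n - k := by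
  have : {j ∈ Icc 1 n | k < j} = Icc (k + 1) n := by
    ext j
    simp only [mem_filter, mem_Icc]
    omega
  rw [this, Nat.card_Icc]
  omega

end IntervalFilter

namespace Branching

def countGT (p : ℕ) (b : ℕ → ℕ → ℕ) (i r : ℕ) : ℕ :=
  #{j ∈ Icc 1 (p + 1 - i) | r < b i j}

def toTableau (p : ℕ) (b : ℕ → ℕ → ℕ) (i r : ℕ) : ℕ :=
  if 1 ≤ r ∧ 0 < countGT p b i r then p + 1 - countGT p b i r else 0

def countLT (m : ℕ) (t : ℕ → ℕ → ℕ) (i k : ℕ) : ℕ :=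
  #{r ∈ Icc 1 (m - 1) | 1 ≤ t i r ∧ t i r < k}

def toBranching (p m : ℕ) (t : ℕ → ℕ → ℕ) (i j : ℕ) : ℕ :=
  if 1 ≤ i ∧ i ≤ p ∧ 1 ≤ j ∧ j ≤ p + 1 - i then 1 + countLT m t i (i + j) else 0

variable {p m : ℕ}

theorem countGT_le_length (b : ℕ → ℕ → ℕ) (i r : ℕ) : countGT p b i r ≤ p + 1 - i := by
  unfold countGT
  simpa using card_filter_le (Icc 1 (p + 1 - i)) fun j => r < b i j

theorem countGT_antitone (b : ℕ → ℕ → ℕ) (i : ℕ) {r s : ℕ} (h : r ≤ s) :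
    countGT p b i s ≤ countGT p b i r :=
  card_le_card (monotone_filter_right _ fun _ _ hj => lt_of_le_of_lt h hj)

theorem countGT_eq_zero {b : ℕ → ℕ → ℕ} {i r : ℕ} (h : ∀ j, b i j ≤ r) : countGT p b i r = 0 :=
  card_eq_zero.2 (filter_eq_empty_iff.2 fun j _ => not_lt.2 (h j))

theorem countLT_le (t : ℕ → ℕ → ℕ) (i k : ℕ) : countLT m t i k ≤ m - 1 := by
  unfold countLT
  simpa using card_filter_le (Icc 1 (m - 1)) fun r => 1 ≤ t i r ∧ t i r < k

theorem countLT_mono (t : ℕ → ℕ → ℕ) (i : ℕ) {k l : ℕ} (h : k ≤ l) :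
    countLT m t i k ≤ countLT m t i l :=
  card_le_card (monotone_filter_right _ fun _ _ hr => ⟨hr.1, lt_of_lt_of_le hr.2 h⟩)

theorem toTableau_of_pos {b : ℕ → ℕ → ℕ} {i r : ℕ} (hr : 1 ≤ r) (h : 0 < countGT p b i r) :
    toTableau p b i r = p + 1 - countGT p b i r :=
  if_pos ⟨hr, h⟩

theorem toTableau_le (b : ℕ → ℕ → ℕ) (i r : ℕ) : toTableau p b i r ≤ p := by
  unfold toTableau
  split_ifs <;> omega

theorem toTableau_eq_zero_of_le {b : ℕ → ℕ → ℕ} (hbm : ∀ i j, b i j ≤ m) {i r : ℕ} (hr : m ≤ r) :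
    toTableau p b i r = 0 := by
  simp [toTableau, countGT_eq_zero fun j => (hbm i j).trans hr]

theorem toBranching_le (hm : 1 ≤ m) (t : ℕ → ℕ → ℕ) (i j : ℕ) : toBranching p m t i j ≤ m := by
  have := countLT_le (m := m) t i (i + j)
  unfold toBranching
  split_ifs <;> omega

end Branching

open Branching

namespace IsPBranching

variable {p m : ℕ} {b : ℕ → ℕ → ℕ}

theorem eq_zero_outside (hb : IsPBranching p b) {i j : ℕ}
    (h : ¬(1 ≤ i ∧ i ≤ p ∧ 1 ≤ j ∧ j ≤ p + 1 - i)) : b i j = 0 :=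
  hb.2.1 i j (by omega)

theorem forall_le_iff (hb : IsPBranching p b) :
    (∀ i j, 1 ≤ i → i ≤ p → 1 ≤ j → j ≤ p + 1 - i → b i j ≤ m) ↔ ∀ i j, b i j ≤ m := by
  refine ⟨fun hbm i j => ?_, fun hbm i j _ _ _ _ => hbm i j⟩
  by_cases h : 1 ≤ i ∧ i ≤ p ∧ 1 ≤ j ∧ j ≤ p + 1 - i
  · exact hbm i j h.1 h.2.1 h.2.2.1 h.2.2.2
  · simp [hb.eq_zero_outside h]

theorem monotoneOn_row (hb : IsPBranching p b) {i : ℕ} (hi : 1 ≤ i) (hip : i ≤ p) :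
    MonotoneOn (b i) (Set.Icc 1 (p + 1 - i)) :=
  monotoneOn_of_le_add_one Set.ordConnected_Icc fun j _ hj hj' =>
    hb.2.2.2 i j hi hip hj.1 hj'.2

theorem lt_iff_sub_countGT_lt (hb : IsPBranching p b) {i j : ℕ} (hi : 1 ≤ i) (hip : i ≤ p)
    (hj : j ∈ Icc 1 (p + 1 - i)) (r : ℕ) : r < b i j ↔ p + 1 - i - countGT p b i r < j :=
  pred_iff_sub_card_lt_of_upClosed (fun j k hj hjk hk hr =>
    lt_of_lt_of_le hr (hb.monotoneOn_row hi hip ⟨hj, by omega⟩ ⟨by omega, hk⟩ hjk)) hj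

theorem countGT_eq_zero_outside (hb : IsPBranching p b) {i : ℕ} (hi : ¬(1 ≤ i ∧ i ≤ p))
    (r : ℕ) : countGT p b i r = 0 :=
  countGT_eq_zero fun j => by
    have := hb.eq_zero_outside (i := i) (j := j) (by omega)
    omega

theorem countGT_le (hb : IsPBranching p b) (i r : ℕ) : countGT p b i r ≤ p := by
  by_cases hi : 1 ≤ i ∧ i ≤ p
  · have := countGT_le_length (p := p) b i r
    omega
  · simp [hb.countGT_eq_zero_outside hi]

/-- Row `i` is one cell longer than row `i + 1` and dominates it, so it has at least one more
entry exceeding `r` as soon as row `i + 1` has one. -/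
theorem countGT_succ_lt (hb : IsPBranching p b) {i r : ℕ} (hi : 1 ≤ i)
    (hpos : 0 < countGT p b (i + 1) r) : countGT p b (i + 1) r < countGT p b i r := by
  have hip : i + 1 ≤ p := by
    by_contra h
    simp [hb.countGT_eq_zero_outside (i := i + 1) (by omega)] at hpos
  have hlen : p + 1 - (i + 1) = p - i := by omega
  have hlast : r < b (i + 1) (p - i) := by
    rw [hb.lt_iff_sub_countGT_lt (by omega) hip (mem_Icc.2 ⟨by omega, by omega⟩), hlen]
    omega
  have hsub : insert (p + 1 - i) {j ∈ Icc 1 (p + 1 - (i + 1)) | r < b (i + 1) j} ⊆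
      {j ∈ Icc 1 (p + 1 - i) | r < b i j} := by
    intro j hj
    simp only [mem_insert, mem_filter, mem_Icc, hlen] at hj ⊢
    rcases hj with rfl | ⟨hj, hbj⟩
    · refine ⟨⟨by omega, le_rfl⟩, lt_of_lt_of_le hlast ?_⟩
      exact (hb.2.2.1 i (p - i) hi hip (by omega) (by omega)).trans
        (hb.monotoneOn_row hi (by omega) ⟨by omega, by omega⟩ ⟨by omega, le_rfl⟩ (by omega))
    · exact ⟨⟨hj.1, by omega⟩, lt_of_lt_of_le hbj (hb.2.2.1 i j hi hip hj.1 (by omega))⟩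
  have := card_le_card hsub
  rw [card_insert_of_notMem (by simp only [mem_filter, mem_Icc, hlen]; omega)] at this
  exact this

theorem one_le_toTableau_iff (hb : IsPBranching p b) {i r : ℕ} :
    1 ≤ toTableau p b i r ↔ 1 ≤ r ∧ 0 < countGT p b i r := by
  have := hb.countGT_le i r
  unfold toTableau
  split_ifs with h
  · exact iff_of_true (by omega) h
  · exact iff_of_false (by omega) h

theorem isSSYT_toTableau (hb : IsPBranching p b) : IsSSYT (toTableau p b) := by
  have hcol : ∀ i r, 1 ≤ i → 0 < countGT p b (i + 1) r →
      countGT p b (i + 1) r < countGT p b i r := fun i r hi => hb.countGT_succ_lt hi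
  have hrow : ∀ i r, countGT p b i (r + 1) ≤ countGT p b i r := fun i r =>
    countGT_antitone b i (Nat.le_succ r)
  have hle := hb.countGT_le
  refine ⟨fun i r h => ?_, fun i r _ hr h => ?_, fun i r hi hr h => ?_,
    fun i r _ hr h => ?_, fun i r hi hr h => ?_⟩
  · by_contra hne
    have := hb.one_le_toTableau_iff.1 (Nat.pos_of_ne_zero hne)
    rw [hb.countGT_eq_zero_outside (by omega)] at this
    omega
  · rw [hb.one_le_toTableau_iff] at h ⊢
    exact ⟨hr, lt_of_lt_of_le h.2 (hrow i r)⟩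
  · rw [hb.one_le_toTableau_iff] at h ⊢
    exact ⟨hr, (Nat.zero_le _).trans_lt (hcol i r hi h.2)⟩
  · rw [hb.one_le_toTableau_iff] at h
    have := hrow i r
    rw [toTableau_of_pos hr (by omega), toTableau_of_pos (by omega) h.2]
    have := hle i r
    omega
  · rw [hb.one_le_toTableau_iff] at h
    have := hcol i r hi h.2
    rw [toTableau_of_pos hr (by omega), toTableau_of_pos hr h.2]
    have := hle i r
    omega

theorem toBranching_toTableau (hb : IsPBranching p b) (hbm : ∀ i j, b i j ≤ m) :
    toBranching p m (toTableau p b) = b := by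
  funext i j
  by_cases h : 1 ≤ i ∧ i ≤ p ∧ 1 ≤ j ∧ j ≤ p + 1 - i
  swap
  · simp [toBranching, h, hb.eq_zero_outside h]
  obtain ⟨hi, hip, hj, hjp⟩ := h
  have hcount : ∀ r, 1 ≤ r →
      (1 ≤ toTableau p b i r ∧ toTableau p b i r < i + j ↔ r < b i j) := by
    intro r hr
    have hlt := hb.lt_iff_sub_countGT_lt hi hip (mem_Icc.2 ⟨hj, hjp⟩) r
    have := hb.countGT_le i r
    rw [hb.one_le_toTableau_iff]
    by_cases hc : 0 < countGT p b i r
    · rw [toTableau_of_pos hr hc, hlt]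
      omega
    · simp only [hc, and_false, false_and, false_iff, hlt]
      omega
  have hset : {r ∈ Icc 1 (m - 1) | 1 ≤ toTableau p b i r ∧ toTableau p b i r < i + j} =
      Icc 1 (b i j - 1) := by
    ext r
    have := hbm i j
    simp only [mem_filter, mem_Icc]
    constructor
    · rintro ⟨hr, hrb⟩
      have := (hcount r hr.1).1 hrb
      omega
    · intro hr
      exact ⟨⟨hr.1, by omega⟩, (hcount r hr.1).2 (by omega)⟩
  have := hb.1 i j hi hip hj hjp
  simp only [toBranching, countLT, hset, Nat.card_Icc]
  rw [if_pos ⟨hi, hip, hj, hjp⟩]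
  omega

end IsPBranching

namespace IsSSYT

variable {p m : ℕ} {t : ℕ → ℕ → ℕ}

theorem le_of_one_le (ht : IsSSYT t) {r : ℕ} (hr : 1 ≤ r) : ∀ i, 1 ≤ t i r → i ≤ t i r
  | 0, _ => Nat.zero_le _
  | i + 1, h => by
    by_cases hi : 1 ≤ i
    · have := ht.le_of_one_le hr i (ht.2.2.1 i r hi hr h)
      have := ht.2.2.2.2 i r hi hr h
      omega
    · omega

theorem eq_zero_of_lt_row (ht : IsSSYT t) (htp : ∀ i j, t i j ≤ p) {i r : ℕ} (hi : p < i) :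
    t i r = 0 := by
  by_contra hne
  by_cases hr : 1 ≤ r
  · have := ht.le_of_one_le hr i (Nat.pos_of_ne_zero hne)
    have := htp i r
    omega
  · exact hne (ht.1 i r (by omega))

theorem one_le_and_le_of_le (ht : IsSSYT t) {i r s : ℕ} (hi : 1 ≤ i) (hr : 1 ≤ r) (hrs : r ≤ s)
    (hs : 1 ≤ t i s) : 1 ≤ t i r ∧ t i r ≤ t i s := by
  induction s, hrs using Nat.le_induction with
  | base => exact ⟨hs, le_rfl⟩
  | succ s hrs ih =>
    have ⟨hpos, hle⟩ := ih (ht.2.1 i s hi (by omega) hs)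
    exact ⟨hpos, hle.trans (ht.2.2.2.1 i s hi (by omega) hs)⟩

theorem le_countLT_iff (ht : IsSSYT t) {i r : ℕ} (hi : 1 ≤ i) (hr : r ∈ Icc 1 (m - 1))
    (k : ℕ) : r ≤ countLT m t i k ↔ 1 ≤ t i r ∧ t i r < k :=
  (pred_iff_le_card_of_downClosed (fun r s hr hrs ⟨hs, hsk⟩ =>
    have := ht.one_le_and_le_of_le hi hr hrs hs
    ⟨this.1, by omega⟩) hr).symm

theorem countLT_succ_le (ht : IsSSYT t) {i : ℕ} (hi : 1 ≤ i) (k : ℕ) :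
    countLT m t (i + 1) (k + 1) ≤ countLT m t i k := by
  refine card_le_card fun r hr => ?_
  simp only [mem_filter, mem_Icc] at hr ⊢
  have := ht.2.2.2.2 i r hi hr.1.1 hr.2.1
  exact ⟨hr.1, ht.2.2.1 i r hi hr.1.1 hr.2.1, by omega⟩

theorem isPBranching_toBranching (ht : IsSSYT t) : IsPBranching p (toBranching p m t) := by
  refine ⟨fun i j h₁ h₂ h₃ h₄ => ?_, fun i j h => ?_, fun i j h₁ h₂ h₃ h₄ => ?_,
    fun i j h₁ h₂ h₃ h₄ => ?_⟩
  · simp [toBranching, h₁, h₂, h₃, h₄]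
  · simp only [toBranching]
    rw [if_neg (by omega)]
  · simp only [toBranching]
    rw [if_pos ⟨by omega, h₂, h₃, h₄⟩, if_pos ⟨h₁, by omega, h₃, by omega⟩]
    have := ht.countLT_succ_le (m := m) h₁ (i + j)
    rw [show i + 1 + j = i + j + 1 by omega]
    omega
  · simp only [toBranching]
    rw [if_pos ⟨h₁, h₂, h₃, by omega⟩, if_pos ⟨h₁, h₂, by omega, h₄⟩]
    have := countLT_mono (m := m) t i (show i + j ≤ i + (j + 1) by omega)
    omega

theorem countGT_toBranching (ht : IsSSYT t) {i r : ℕ} (hi : 1 ≤ i) (hip : i ≤ p)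
    (hr : r ∈ Icc 1 (m - 1)) :
    countGT p (toBranching p m t) i r = #{j ∈ Icc 1 (p + 1 - i) | 1 ≤ t i r ∧ t i r < i + j} := by
  refine congrArg card (filter_congr fun j hj => ?_)
  rw [mem_Icc] at hj
  rw [toBranching, if_pos ⟨hi, hip, hj.1, hj.2⟩, ← ht.le_countLT_iff hi hr]
  omega

theorem toTableau_toBranching (ht : IsSSYT t) (htp : ∀ i j, t i j ≤ p)
    (htm : ∀ i j, m ≤ j → t i j = 0) (hm : 1 ≤ m) : toTableau p (toBranching p m t) = t := by
  have hb : IsPBranching p (toBranching p m t) := ht.isPBranching_toBranching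
  funext i r
  by_cases hr : 1 ≤ r ∧ r ≤ m - 1
  swap
  · by_cases hrm : m ≤ r
    · rw [toTableau_eq_zero_of_le (toBranching_le hm t) hrm, htm i r hrm]
    · simp [toTableau, ht.1 i r (by omega), show ¬1 ≤ r by omega]
  by_cases hi : 1 ≤ i ∧ i ≤ p
  swap
  · have : t i r = 0 := by
      rcases Nat.lt_or_ge p i with hpi | hpi
      · exact ht.eq_zero_of_lt_row htp hpi
      · exact ht.1 i r (by omega)
    simp [toTableau, hb.countGT_eq_zero_outside hi, this]
  have hcount := ht.countGT_toBranching (p := p) hi.1 hi.2 (mem_Icc.2 hr)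
  by_cases hpos : 1 ≤ t i r
  · have := ht.le_of_one_le hr.1 i hpos
    have := htp i r
    have hcard : countGT p (toBranching p m t) i r = p + 1 - t i r := by
      rw [hcount, filter_congr (q := fun j => t i r - i < j) fun j _ => by omega,
        card_filter_Icc_lt]
      omega
    rw [toTableau_of_pos hr.1 (by omega), hcard]
    omega
  · rw [toTableau, if_neg (by simp [hcount, hpos])]
    omega

end IsSSYT

def branchingTableauEquiv (p m : ℕ) (hm : 1 ≤ m) :
    {b : ℕ → ℕ → ℕ // IsPBranching p b ∧
        ∀ i j, 1 ≤ i → i ≤ p → 1 ≤ j → j ≤ p + 1 - i → b i j ≤ m} ≃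
    {t : ℕ → ℕ → ℕ // IsSSYT t ∧ (∀ i j, t i j ≤ p) ∧ (∀ i j, m ≤ j → t i j = 0)} where
  toFun b := ⟨toTableau p b.1, b.2.1.isSSYT_toTableau, toTableau_le b.1,
    fun _ _ => toTableau_eq_zero_of_le (b.2.1.forall_le_iff.1 b.2.2)⟩
  invFun t := ⟨toBranching p m t.1, t.2.1.isPBranching_toBranching,
    t.2.1.isPBranching_toBranching.forall_le_iff.2 (toBranching_le hm t.1)⟩
  left_inv b := Subtype.ext (b.2.1.toBranching_toTableau (b.2.1.forall_le_iff.1 b.2.2))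
  right_inv t := Subtype.ext (t.2.1.toTableau_toBranching t.2.2.1 t.2.2.2 hm)

theorem card_branchings_eq_card_ssyt_general (p m : ℕ) (hm : 1 ≤ m) :
    Nat.card {b : ℕ → ℕ → ℕ // IsPBranching p b ∧
        ∀ i j, 1 ≤ i → i ≤ p → 1 ≤ j → j ≤ p + 1 - i → b i j ≤ m} =
    Nat.card {t : ℕ → ℕ → ℕ // IsSSYT t ∧ (∀ i j, t i j ≤ p) ∧
        (∀ i j, m ≤ j → t i j = 0)} :=
  Nat.card_congr (branchingTableauEquiv p m hm)

/-- For `p, m ≥ 1`, the number of `p`-branchings with all entries at most `m` equals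
the number of semi-standard Young tableaux with entries in `{1, …, p}` having fewer
than `m` columns (i.e. every row has length at most `m - 1`). -/
theorem card_branchings_eq_card_ssyt (p m : ℕ) (hp : 1 ≤ p) (hm : 1 ≤ m) :
    Nat.card {b : ℕ → ℕ → ℕ // IsPBranching p b ∧
        ∀ i j, 1 ≤ i → i ≤ p → 1 ≤ j → j ≤ p + 1 - i → b i j ≤ m} =
    Nat.card {t : ℕ → ℕ → ℕ // IsSSYT t ∧ (∀ i j, t i j ≤ p) ∧
        (∀ i j, m ≤ j → t i j = 0)} :=
  card_branchings_eq_card_ssyt_general p m hm
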